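/- arXiv:1604.01483 — 2 statements merged into one kernel-verified Lean document; each statement's English description precedes it below -/
import Mathlib

section
/- Let u : ℝ² → ℝ² be C², globally Lipschitz, with divergence ∇·u, and let x̄ : ℝ → ℝ² solve x̄′(p) = u(x̄(p)) with u(x̄(p)) ≠ 0 for every p. Fix p^u < p^d, set a = x̄(p^u), and suppose (open-interface condition) there is δ > 0 such that w(x,t) = 0 for all t whenever |x − x̄(p)| < δ for some p ≤ p^u or some p ≥ p^d. Define M^u_ε(p,t) := 0 for p < p^u, and for p ≥ p^u, M^u_ε(p,t) := ε ∫_{p^u}^{min(p,p^d)} exp(∫_τ^p (∇·u)(x̄(ξ)) dξ) ⟨J u(x̄(τ)), w(x̄(τ), τ + t − p)⟩ dτ. Then for every P > 0 there exist C > 0 and ε₀ > 0 such that for all p ∈ [−P, P], all t ∈ ℝ, and all ε ∈ (0, ε₀], |⟨x_ε^u(p,t) − x̄(p), n̂(p)⟩ − M^u_ε(p,t)/|u(x̄(p))|| ≤ C ε². -/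
/-!
Shift time so that `y q = X (q + t - p)` is a solution starting on the streakline at `q = pu`;
by Grönwall, `y - x̄ = O(ε)` on bounded windows. Upstream of `pu` the agitation vanishes within
`δ` of `x̄`, so `y` never leaves `x̄` and both sides of the estimate vanish. Downstream, the normal
component `m = ⟪J u(x̄), y - x̄⟫` solves the scalar linear equation
`m' = (∇·u)(x̄) m + ⟪J u(x̄), R + ε w(y, ·)⟫`, thanks to the planar identity
`tr A ⟪J v, y⟫ = ⟪J (A v), y⟫ + ⟪J v, A y⟫`, where `R` is the Taylor remainder of `u` around `x̄`,
of size `O(ε²)`. Variation of constants writes `m p` as an integral whose leading part is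
`M^u_ε` (the agitation vanishes on `x̄` beyond `pd`), and the rest is `O(ε²)` because `w` is
Lipschitz in space.
-/

open scoped InnerProductSpace NNReal

noncomputable section

/-- The plane with its Euclidean inner product. -/
abbrev E2 : Type := EuclideanSpace ℝ (Fin 2)

/-- Rotation by +π/2 : J(x₁,x₂) = (−x₂, x₁). -/
noncomputable def Jrot : E2 → E2 :=
  fun x => (WithLp.equiv 2 (Fin 2 → ℝ)).symm ![-(x 1), x 0]

/-- Divergence of a planar vector field, as the trace of its Fréchet derivative. -/
noncomputable def div2 (u : E2 → E2) (x : E2) : ℝ :=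
  LinearMap.trace ℝ E2 (fderiv ℝ u x).toLinearMap

/-- The leading-order upstream streakline displacement function (open interface):
zero for `p < pu`, and otherwise the Melnikov-type integral. -/
noncomputable def MuOpen (u : E2 → E2) (xbar : ℝ → E2) (w : E2 → ℝ → E2)
    (pu pd ε p t : ℝ) : ℝ :=
  if p < pu then 0
  else ε * ∫ τ in pu..(min p pd),
    Real.exp (∫ ξ in τ..p, div2 u (xbar ξ)) *
      ⟪Jrot (u (xbar τ)), w (xbar τ) (τ + t - p)⟫_ℝ

open Set Real intervalIntegral

section Gronwall

variable {E : Type*} [NormedAddCommGroup E] [NormedSpace ℝ E]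

theorem gronwallBound_zero_le {K B x L : ℝ} (hK : 0 ≤ K) (hB : 0 ≤ B) (hx : 0 ≤ x)
    (hxL : x ≤ L) : gronwallBound 0 K B x ≤ B * L * exp (K * L) := by
  refine (gronwallBound_mono le_rfl hB hK hxL).trans ?_
  rcases hK.eq_or_lt with rfl | hK
  · simp [gronwallBound_K0]
  · have hL : 0 ≤ K * L := by nlinarith
    -- `1 - KL ≤ exp (-KL)`, multiplied by `exp (KL)`
    have key : exp (K * L) - 1 ≤ K * L * exp (K * L) := by
      have h := add_one_le_exp (-(K * L))
      have h' : exp (-(K * L)) * exp (K * L) = 1 := by rw [← exp_add, neg_add_cancel, exp_zero]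
      nlinarith [exp_pos (K * L)]
    simp only [gronwallBound_of_K_ne_0 hK.ne', zero_mul, zero_add]
    rw [div_mul_eq_mul_div, div_le_iff₀ hK]
    nlinarith

theorem norm_sub_le_of_hasDerivAt_add_of_le {u : E → E} {K : ℝ≥0} (hu : LipschitzWith K u)
    {x y f : ℝ → E} {a b B L : ℝ} (hL : b - a ≤ L)
    (hx : ∀ s, HasDerivAt x (u (x s)) s) (hy : ∀ s, HasDerivAt y (u (y s) + f s) s)
    (ha : y a = x a) (hf : ∀ s ∈ Icc a b, ‖f s‖ ≤ B) :
    ∀ s ∈ Icc a b, ‖y s - x s‖ ≤ B * L * exp (K * L) := by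
  intro s hs
  have hB : 0 ≤ B := (norm_nonneg _).trans (hf s hs)
  have hcont : ∀ z : ℝ → E, (∀ s, DifferentiableAt ℝ z s) → ContinuousOn z (Icc a b) :=
    fun z hz => fun s _ => (hz s).continuousAt.continuousWithinAt
  have := dist_le_of_approx_trajectories_ODE (v := fun _ => u) (fun _ => hu)
    (hcont y fun s => (hy s).differentiableAt) (fun s _ => (hy s).hasDerivWithinAt)
    (εf := B) (fun s hs => by simpa [dist_eq_norm] using hf s (Ico_subset_Icc_self hs))
    (hcont x fun s => (hx s).differentiableAt) (fun s _ => (hx s).hasDerivWithinAt)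
    (εg := 0) (fun s _ => by simp) (δ := 0) (by simp [ha]) s hs
  rw [add_zero] at this
  rw [← dist_eq_norm]
  exact this.trans (gronwallBound_zero_le K.coe_nonneg hB (by linarith [hs.1]) (by linarith [hs.2]))

theorem norm_sub_le_of_hasDerivAt_add {u : E → E} {K : ℝ≥0} (hu : LipschitzWith K u)
    {x y f : ℝ → E} {a b B L : ℝ} (hL : |b - a| ≤ L)
    (hx : ∀ s, HasDerivAt x (u (x s)) s) (hy : ∀ s, HasDerivAt y (u (y s) + f s) s)
    (ha : y a = x a) (hf : ∀ s ∈ uIcc a b, ‖f s‖ ≤ B) :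
    ∀ s ∈ uIcc a b, ‖y s - x s‖ ≤ B * L * exp (K * L) := by
  rcases le_total a b with hab | hba
  · rw [uIcc_of_le hab] at hf ⊢
    exact norm_sub_le_of_hasDerivAt_add_of_le hu ((le_abs_self _).trans hL) hx hy ha hf
  · -- run time backwards: `s ↦ a + b - s` maps `[b, a]` onto itself and `b` to `a`
    rw [uIcc_of_ge hba] at hf ⊢
    intro s hs
    have hmem : ∀ s ∈ Icc b a, a + b - s ∈ Icc b a := fun s hs =>
      ⟨by linarith [hs.2], by linarith [hs.1]⟩
    have key := norm_sub_le_of_hasDerivAt_add_of_le (u := -u) (L := L)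
      (x := fun s => x (a + b - s)) (y := fun s => y (a + b - s))
      (f := fun s => -f (a + b - s)) hu.neg
      (by rw [abs_sub_comm] at hL; exact (le_abs_self _).trans hL)
      (fun s => by simpa using (hx (a + b - s)).comp_const_sub (a + b) s)
      (fun s => ((hy (a + b - s)).comp_const_sub (a + b) s).congr_deriv
        (by simp only [Pi.neg_apply, neg_add]))
      (by simpa using ha) (fun s hs => by simpa using hf _ (hmem s hs)) (a + b - s) (hmem s hs)
    simpa using key

theorem eq_of_hasDerivAt_add_of_forcing_eq_zero {u : E → E} {K : ℝ≥0} (hu : LipschitzWith K u)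
    {x y f : ℝ → E} {a b B L δ : ℝ} (hL : |b - a| ≤ L) (hsmall : B * L * exp (K * L) < δ)
    (hx : ∀ s, HasDerivAt x (u (x s)) s) (hy : ∀ s, HasDerivAt y (u (y s) + f s) s)
    (ha : y a = x a) (hf : ∀ s ∈ uIcc a b, ‖f s‖ ≤ B)
    (hvanish : ∀ s ∈ uIcc a b, ‖y s - x s‖ < δ → f s = 0) : y b = x b := by
  have hclose := norm_sub_le_of_hasDerivAt_add hu hL hx hy ha hf
  have hfree : ∀ s ∈ uIcc a b, ‖f s‖ ≤ 0 := fun s hs => by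
    rw [hvanish s hs ((hclose s hs).trans_lt hsmall), norm_zero]
  have := norm_sub_le_of_hasDerivAt_add hu hL hx hy ha hfree b right_mem_uIcc
  rwa [zero_mul, zero_mul, norm_le_zero_iff, sub_eq_zero] at this

end Gronwall

section Taylor

variable {E F : Type*} [NormedAddCommGroup E] [NormedSpace ℝ E] [NormedAddCommGroup F]
  [NormedSpace ℝ F]

theorem norm_sub_sub_fderiv_le_of_mem_closedBall {u : E → F} (hu : ContDiff ℝ 2 u) {x y : E}
    {r C : ℝ} (hy : y ∈ Metric.closedBall x r)
    (hC : ∀ z ∈ Metric.closedBall x r, ‖fderiv ℝ (fderiv ℝ u) z‖ ≤ C) :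
    ‖u y - u x - fderiv ℝ u x (y - x)‖ ≤ C * r ^ 2 := by
  have hr : 0 ≤ r := Metric.nonempty_closedBall.1 ⟨y, hy⟩
  have hx : x ∈ Metric.closedBall x r := Metric.mem_closedBall_self hr
  have hC₀ : 0 ≤ C := (norm_nonneg (fderiv ℝ (fderiv ℝ u) x)).trans (hC x hx)
  have hDu : ∀ z ∈ Metric.closedBall x r, ‖fderiv ℝ u z - fderiv ℝ u x‖ ≤ C * r := by
    intro z hz
    calc ‖fderiv ℝ u z - fderiv ℝ u x‖ ≤ C * ‖z - x‖ :=
          (convex_closedBall x r).norm_image_sub_le_of_norm_fderiv_le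
            (fun a _ => ((hu.fderiv_right le_rfl).differentiable one_ne_zero).differentiableAt)
            hC hx hz
      _ ≤ C * r := by gcongr; exact mem_closedBall_iff_norm.1 hz
  calc ‖u y - u x - fderiv ℝ u x (y - x)‖ ≤ C * r * ‖y - x‖ :=
        (convex_closedBall x r).norm_image_sub_le_of_norm_fderiv_le'
          (fun a _ => (hu.differentiable two_ne_zero).differentiableAt) hDu hx hy
    _ ≤ C * r ^ 2 := by rw [sq, ← mul_assoc]; gcongr; exact mem_closedBall_iff_norm.1 hy

end Taylor

theorem continuous_exp_integral_mul {a g : ℝ → ℝ} (ha : Continuous a) (hg : Continuous g)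
    (p : ℝ) : Continuous fun q => exp (∫ ξ in q..p, a ξ) * g q := by
  have hprim := (continuous_primitive (μ := MeasureTheory.volume)
    (fun _ _ => ha.intervalIntegrable _ _) p).neg
  exact (continuous_exp.comp (hprim.congr fun q => (integral_symm p q).symm)).mul hg

theorem variation_of_constants {m a f : ℝ → ℝ} {q₀ : ℝ} (ha : Continuous a)
    (hf : Continuous f) (hm : ∀ q, HasDerivAt m (a q * m q + f q) q) (h₀ : m q₀ = 0)
    (p : ℝ) : m p = ∫ q in q₀..p, exp (∫ ξ in q..p, a ξ) * f q := by
  set G := fun q => ∫ ξ in q₀..q, a ξ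
  have hG : ∀ q, HasDerivAt G (a q) q := fun q =>
    integral_hasDerivAt_right (ha.intervalIntegrable _ _) (ha.stronglyMeasurableAtFilter _ _)
      ha.continuousAt
  have hGsub : ∀ q, ∫ ξ in q..p, a ξ = G p + -G q := fun q => by
    rw [← sub_eq_add_neg, integral_interval_sub_left (ha.intervalIntegrable _ _)
      (ha.intervalIntegrable _ _)]
  -- `exp (-G)` is an integrating factor
  have hderiv : ∀ q, HasDerivAt (fun q => exp (-G q) * m q) (exp (-G q) * f q) q := fun q =>
    (((hG q).neg.exp).mul (hm q)).congr_deriv (by simp only [Pi.neg_apply]; ring)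
  have hcont : Continuous fun q => exp (-G q) * f q :=
    (continuous_exp.comp
      (continuous_primitive (fun _ _ => ha.intervalIntegrable _ _) q₀).neg).mul hf
  have hFTC := integral_eq_sub_of_hasDerivAt (fun q _ => hderiv q) (hcont.intervalIntegrable q₀ p)
  simp_rw [hGsub, exp_add, mul_assoc, integral_const_mul, hFTC, h₀, mul_zero, sub_zero,
    ← mul_assoc, ← exp_add, add_neg_cancel, exp_zero, one_mul]

theorem abs_integral_exp_integral_mul_le {a f : ℝ → ℝ} {q₀ p D H Λ : ℝ} (hp : q₀ ≤ p)
    (hΛ : p - q₀ ≤ Λ) (ha : ∀ q ∈ Icc q₀ p, |a q| ≤ D) (hf : ∀ q ∈ Icc q₀ p, |f q| ≤ H) :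
    |∫ q in q₀..p, exp (∫ ξ in q..p, a ξ) * f q| ≤ Λ * exp (D * Λ) * H := by
  have hD : 0 ≤ D := (abs_nonneg _).trans (ha p ⟨hp, le_rfl⟩)
  have hH : 0 ≤ H := (abs_nonneg _).trans (hf p ⟨hp, le_rfl⟩)
  have hpt : ∀ q ∈ uIoc q₀ p, ‖exp (∫ ξ in q..p, a ξ) * f q‖ ≤ exp (D * Λ) * H := by
    intro q hq
    rw [uIoc_of_le hp] at hq
    have hexp : ∫ ξ in q..p, a ξ ≤ D * Λ := by
      have hbound := norm_integral_le_of_norm_le_const (a := q) (b := p) (f := a) (C := D)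
        (fun ξ hξ => by
          rw [uIoc_of_le hq.2] at hξ
          exact ha ξ ⟨hq.1.le.trans hξ.1.le, hξ.2⟩)
      rw [Real.norm_eq_abs, abs_of_nonneg (sub_nonneg.2 hq.2)] at hbound
      calc ∫ ξ in q..p, a ξ ≤ |∫ ξ in q..p, a ξ| := le_abs_self _
        _ ≤ D * (p - q) := hbound
        _ ≤ D * Λ := by gcongr; linarith [hq.1]
    rw [norm_mul, Real.norm_of_nonneg (exp_pos _).le, Real.norm_eq_abs]
    exact mul_le_mul (exp_le_exp.2 hexp) (hf q (Ioc_subset_Icc_self hq)) (abs_nonneg _)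
      (exp_pos _).le
  have := norm_integral_le_of_norm_le_const hpt
  rw [Real.norm_eq_abs, abs_of_nonneg (sub_nonneg.2 hp)] at this
  calc _ ≤ exp (D * Λ) * H * (p - q₀) := this
    _ ≤ exp (D * Λ) * H * Λ := by gcongr
    _ = Λ * exp (D * Λ) * H := by ring

theorem Jrot_add (x y : E2) : Jrot (x + y) = Jrot x + Jrot y := by
  ext i; fin_cases i <;> simp [Jrot, add_comm]

theorem Jrot_smul (c : ℝ) (x : E2) : Jrot (c • x) = c • Jrot x := by
  ext i; fin_cases i <;> simp [Jrot]

def JrotCLM : E2 →L[ℝ] E2 :=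
  LinearMap.toContinuousLinearMap
    { toFun := Jrot, map_add' := Jrot_add, map_smul' := Jrot_smul }

theorem norm_Jrot (x : E2) : ‖Jrot x‖ = ‖x‖ := by
  simp [EuclideanSpace.norm_eq, Fin.sum_univ_two, Jrot, add_comm]

theorem inner_Jrot (v y : E2) : ⟪Jrot v, y⟫_ℝ = v 0 * y 1 - v 1 * y 0 := by
  simp only [Jrot, WithLp.equiv_symm_apply, PiLp.inner_apply, RCLike.inner_apply, ringHom_apply,
    Fin.sum_univ_two, Matrix.cons_val_zero, Matrix.cons_val_one, Matrix.cons_val_fin_one]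
  ring

theorem trace_mul_inner_Jrot (A : E2 →L[ℝ] E2) (v y : E2) :
    LinearMap.trace ℝ E2 A.toLinearMap * ⟪Jrot v, y⟫_ℝ
      = ⟪Jrot (A v), y⟫_ℝ + ⟪Jrot v, A y⟫_ℝ := by
  set e := EuclideanSpace.basisFun (Fin 2) ℝ
  have hA : ∀ x : E2, A x = x 0 • A (e 0) + x 1 • A (e 1) := fun x => by
    conv_lhs => rw [← e.toBasis.sum_repr x]
    simp [Fin.sum_univ_two, e, EuclideanSpace.basisFun_repr]
  rw [LinearMap.trace_eq_matrix_trace ℝ e.toBasis, Matrix.trace, hA v, hA y]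
  simp only [Matrix.diag_apply, LinearMap.toMatrix_apply, OrthonormalBasis.coe_toBasis,
    EuclideanSpace.basisFun_apply, ContinuousLinearMap.coe_coe,
    OrthonormalBasis.coe_toBasis_repr_apply, EuclideanSpace.basisFun_repr, Fin.sum_univ_two,
    inner_Jrot, PiLp.add_apply, PiLp.smul_apply, smul_eq_mul, e]
  ring

theorem continuous_div2 {u : E2 → E2} (hu : ContDiff ℝ 1 u) : Continuous (div2 u) :=
  (LinearMap.continuous_of_finiteDimensional
    ((LinearMap.trace ℝ E2).comp (ContinuousLinearMap.coeLM ℝ))).comp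
    (hu.continuous_fderiv one_ne_zero)

section Streakline

variable {u : E2 → E2} {xbar : ℝ → E2}

theorem hasDerivAt_inner_Jrot (hu : Differentiable ℝ u) {z : ℝ → E2} {r : E2} {q : ℝ}
    (hxbar : HasDerivAt xbar (u (xbar q)) q)
    (hz : HasDerivAt z (fderiv ℝ u (xbar q) (z q) + r) q) :
    HasDerivAt (fun q => ⟪Jrot (u (xbar q)), z q⟫_ℝ)
      (div2 u (xbar q) * ⟪Jrot (u (xbar q)), z q⟫_ℝ + ⟪Jrot (u (xbar q)), r⟫_ℝ) q := by
  have hJu : HasDerivAt (fun q => Jrot (u (xbar q))) (Jrot (fderiv ℝ u (xbar q) (u (xbar q)))) q :=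
    JrotCLM.hasFDerivAt.comp_hasDerivAt q ((hu (xbar q)).hasFDerivAt.comp_hasDerivAt q hxbar)
  refine (hJu.inner ℝ hz).congr_deriv ?_
  rw [inner_add_right, div2, trace_mul_inner_Jrot]
  ring

theorem continuous_taylor_remainder (hu : ContDiff ℝ 1 u) (hxbar : Continuous xbar)
    {y : ℝ → E2} (hy : Continuous y) :
    Continuous fun q => u (y q) - u (xbar q) - fderiv ℝ u (xbar q) (y q - xbar q) :=
  ((hu.continuous.comp hy).sub (hu.continuous.comp hxbar)).sub
    (((hu.continuous_fderiv one_ne_zero).comp hxbar).clm_apply (hy.sub hxbar))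

theorem inner_Jrot_sub_eq_integral (hu : ContDiff ℝ 1 u)
    (hxbar : ∀ p, HasDerivAt xbar (u (xbar p)) p) {y f : ℝ → E2} (hf : Continuous f)
    (hy : ∀ q, HasDerivAt y (u (y q) + f q) q) {q₀ : ℝ} (hy₀ : y q₀ = xbar q₀) (p : ℝ) :
    ⟪Jrot (u (xbar p)), y p - xbar p⟫_ℝ = ∫ q in q₀..p, exp (∫ ξ in q..p, div2 u (xbar ξ)) *
      ⟪Jrot (u (xbar q)),
        u (y q) - u (xbar q) - fderiv ℝ u (xbar q) (y q - xbar q) + f q⟫_ℝ := by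
  have hxc : Continuous xbar := continuous_iff_continuousAt.2 fun q => (hxbar q).continuousAt
  have hyc : Continuous y := continuous_iff_continuousAt.2 fun q => (hy q).continuousAt
  refine variation_of_constants (m := fun q => ⟪Jrot (u (xbar q)), y q - xbar q⟫_ℝ)
    ((continuous_div2 hu).comp hxc)
    ((JrotCLM.continuous.comp (hu.continuous.comp hxc)).inner
      ((continuous_taylor_remainder hu hxc hyc).add hf))
    (fun q => hasDerivAt_inner_Jrot (hu.differentiable one_ne_zero) (hxbar q)
      (r := u (y q) - u (xbar q) - fderiv ℝ u (xbar q) (y q - xbar q) + f q)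
      (((hy q).sub (hxbar q)).congr_deriv (by abel))) (by simp [hy₀]) p

variable {w : E2 → ℝ → E2} {pu pd : ℝ}

theorem MuOpen_eq_of_le (hu : ContDiff ℝ 1 u) (hxbar : Continuous xbar)
    (hw : Continuous (Function.uncurry w)) (hdown : ∀ τ, pd ≤ τ → ∀ s, w (xbar τ) s = 0)
    {ε p t : ℝ} (hp : pu ≤ p) :
    MuOpen u xbar w pu pd ε p t = ε * ∫ τ in pu..p, exp (∫ ξ in τ..p, div2 u (xbar ξ)) *
      ⟪Jrot (u (xbar τ)), w (xbar τ) (τ + t - p)⟫_ℝ := by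
  rw [MuOpen, if_neg (not_lt.2 hp)]
  congr 1
  have hF : Continuous fun τ => exp (∫ ξ in τ..p, div2 u (xbar ξ)) *
      ⟪Jrot (u (xbar τ)), w (xbar τ) (τ + t - p)⟫_ℝ :=
    continuous_exp_integral_mul ((continuous_div2 hu).comp hxbar)
      ((JrotCLM.continuous.comp (hu.continuous.comp hxbar)).inner
        (hw.comp (hxbar.prodMk (by fun_prop)))) p
  rcases le_total p pd with hpd | hdp
  · rw [min_eq_left hpd]
  · rw [min_eq_right hdp, ← integral_add_adjacent_intervals (hF.intervalIntegrable pu pd)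
      (hF.intervalIntegrable pd p), integral_congr (a := pd) (b := p) (g := fun _ => 0) ?_,
      integral_zero, add_zero]
    intro τ hτ
    simp [hdown τ (uIcc_of_le hdp ▸ hτ).1]

theorem inner_Jrot_sub_MuOpen_eq_integral (hu : ContDiff ℝ 1 u)
    (hxbar : ∀ p, HasDerivAt xbar (u (xbar p)) p) (hw : Continuous (Function.uncurry w))
    (hdown : ∀ τ, pd ≤ τ → ∀ s, w (xbar τ) s = 0) {y : ℝ → E2} {ε t p : ℝ} (hp : pu ≤ p)
    (hy : ∀ q, HasDerivAt y (u (y q) + ε • w (y q) (q + t - p)) q) (hy₀ : y pu = xbar pu) :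
    ⟪Jrot (u (xbar p)), y p - xbar p⟫_ℝ - MuOpen u xbar w pu pd ε p t =
      ∫ q in pu..p, exp (∫ ξ in q..p, div2 u (xbar ξ)) * ⟪Jrot (u (xbar q)),
        u (y q) - u (xbar q) - fderiv ℝ u (xbar q) (y q - xbar q) +
          ε • (w (y q) (q + t - p) - w (xbar q) (q + t - p))⟫_ℝ := by
  have hxc : Continuous xbar := continuous_iff_continuousAt.2 fun q => (hxbar q).continuousAt
  have hyc : Continuous y := continuous_iff_continuousAt.2 fun q => (hy q).continuousAt
  have hWy : Continuous fun q => w (y q) (q + t - p) := hw.comp (hyc.prodMk (by fun_prop))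
  have hJu : Continuous fun q => Jrot (u (xbar q)) :=
    JrotCLM.continuous.comp (hu.continuous.comp hxc)
  have hdiv := (continuous_div2 hu).comp hxc
  rw [inner_Jrot_sub_eq_integral hu hxbar (f := fun q => ε • w (y q) (q + t - p))
    (hWy.const_smul ε) hy hy₀, MuOpen_eq_of_le hu hxc hw hdown hp, ← integral_const_mul,
    ← integral_sub ?_ ?_]
  · refine integral_congr fun q _ => ?_
    simp only [smul_sub, inner_add_right, inner_sub_right, real_inner_smul_right]
    ring
  · exact (continuous_exp_integral_mul hdiv (hJu.inner
      ((continuous_taylor_remainder hu hxc hyc).add (hWy.const_smul ε))) p).intervalIntegrable _ _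
  · exact ((continuous_exp_integral_mul hdiv (hJu.inner (hw.comp (hxc.prodMk (by fun_prop))))
      p).const_mul ε).intervalIntegrable _ _

theorem abs_inner_Jrot_sub_MuOpen_le (hu : ContDiff ℝ 2 u)
    (hxbar : ∀ p, HasDerivAt xbar (u (xbar p)) p) (hw : Continuous (Function.uncurry w))
    {Kw : ℝ≥0} (hwLip : ∀ t, LipschitzWith Kw fun x => w x t)
    (hdown : ∀ τ, pd ≤ τ → ∀ s, w (xbar τ) s = 0)
    {y : ℝ → E2} {ε t p η U D C₂ Λ : ℝ} (hε : 0 ≤ ε) (hp : pu ≤ p) (hΛ : p - pu ≤ Λ)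
    (hy : ∀ q, HasDerivAt y (u (y q) + ε • w (y q) (q + t - p)) q) (hy₀ : y pu = xbar pu)
    (hdev : ∀ q ∈ Icc pu p, ‖y q - xbar q‖ ≤ η)
    (hU : ∀ q ∈ Icc pu p, ‖u (xbar q)‖ ≤ U) (hD : ∀ q ∈ Icc pu p, |div2 u (xbar q)| ≤ D)
    (hC₂ : ∀ q ∈ Icc pu p, ∀ x ∈ Metric.closedBall (xbar q) η,
      ‖fderiv ℝ (fderiv ℝ u) x‖ ≤ C₂) :
    |⟪Jrot (u (xbar p)), y p - xbar p⟫_ℝ - MuOpen u xbar w pu pd ε p t|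
      ≤ Λ * exp (D * Λ) * (U * (C₂ * η ^ 2 + ε * (Kw * η))) := by
  rw [inner_Jrot_sub_MuOpen_eq_integral (hu.of_le one_le_two) hxbar hw hdown hp hy hy₀]
  refine abs_integral_exp_integral_mul_le hp hΛ hD fun q hq => ?_
  have hR : ‖u (y q) - u (xbar q) - fderiv ℝ u (xbar q) (y q - xbar q)‖ ≤ C₂ * η ^ 2 :=
    norm_sub_sub_fderiv_le_of_mem_closedBall hu (mem_closedBall_iff_norm.2 (hdev q hq))
      (hC₂ q hq)
  have hW : ‖ε • (w (y q) (q + t - p) - w (xbar q) (q + t - p))‖ ≤ ε * (Kw * η) := by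
    rw [norm_smul_of_nonneg hε]
    exact mul_le_mul_of_nonneg_left (((hwLip _).norm_sub_le _ _).trans
      (mul_le_mul_of_nonneg_left (hdev q hq) Kw.coe_nonneg)) hε
  refine (abs_real_inner_le_norm _ _).trans ?_
  rw [norm_Jrot]
  exact mul_le_mul (hU q hq) ((norm_add_le _ _).trans (add_le_add hR hW)) (norm_nonneg _)
    ((norm_nonneg _).trans (hU q hq))

theorem inner_Jrot_sub_MuOpen_eq_zero_of_lt {K : ℝ≥0} (huLip : LipschitzWith K u)
    (hxbar : ∀ p, HasDerivAt xbar (u (xbar p)) p) {Cw δ : ℝ} (hwbdd : ∀ x t, ‖w x t‖ ≤ Cw)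
    (hup : ∀ x t, (∃ q ≤ pu, ‖x - xbar q‖ < δ) → w x t = 0)
    {y : ℝ → E2} {ε t p L : ℝ} (hε : 0 ≤ ε) (hp : p < pu) (hL : pu - p ≤ L)
    (hsmall : ε * Cw * L * exp (K * L) < δ)
    (hy : ∀ q, HasDerivAt y (u (y q) + ε • w (y q) (q + t - p)) q) (hy₀ : y pu = xbar pu) :
    ⟪Jrot (u (xbar p)), y p - xbar p⟫_ℝ - MuOpen u xbar w pu pd ε p t = 0 := by
  have hyp : y p = xbar p := by
    refine eq_of_hasDerivAt_add_of_forcing_eq_zero huLip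
      (by rwa [abs_sub_comm, abs_of_pos (sub_pos.2 hp)]) hsmall hxbar hy hy₀
      (fun q _ => (norm_smul_of_nonneg hε _).trans_le (mul_le_mul_of_nonneg_left (hwbdd _ _) hε))
      fun q hq hclose => ?_
    rw [hup _ _ ⟨q, hq.2.trans (max_eq_left hp.le).le, hclose⟩, smul_zero]
  simp [MuOpen, hp, hyp]

theorem exists_abs_inner_Jrot_sub_MuOpen_le (hu : ContDiff ℝ 2 u) {K : ℝ≥0}
    (huLip : LipschitzWith K u) (hxbar : ∀ p, HasDerivAt xbar (u (xbar p)) p)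
    (hw : Continuous (Function.uncurry w)) {Cw : ℝ} (hwbdd : ∀ x t, ‖w x t‖ ≤ Cw) {Kw : ℝ≥0}
    (hwLip : ∀ t, LipschitzWith Kw fun x => w x t) {δ : ℝ} (hδ : 0 < δ)
    (hopen : ∀ x t, (∃ p, (p ≤ pu ∨ pd ≤ p) ∧ ‖x - xbar p‖ < δ) → w x t = 0)
    {L : ℝ} (hL : |pu| ≤ L) :
    ∃ C, ∃ ε₀ > 0, ∀ p ∈ Icc (-L) L, ∀ t, ∀ ε ∈ Ioc 0 ε₀, ∀ y : ℝ → E2,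
      (∀ q, HasDerivAt y (u (y q) + ε • w (y q) (q + t - p)) q) → y pu = xbar pu →
      |⟪Jrot (u (xbar p)), y p - xbar p⟫_ℝ - MuOpen u xbar w pu pd ε p t| ≤ C * ε ^ 2 := by
  have hxc : Continuous xbar := continuous_iff_continuousAt.2 fun q => (hxbar q).continuousAt
  obtain ⟨U, hU⟩ := (isCompact_Icc (a := -L) (b := L)).exists_bound_of_continuousOn
    (hu.continuous.comp hxc).continuousOn
  obtain ⟨D, hD⟩ := (isCompact_Icc (a := -L) (b := L)).exists_bound_of_continuousOn
    ((continuous_div2 (hu.of_le one_le_two)).comp hxc).continuousOn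
  obtain ⟨C₂, hC₂⟩ := ((isCompact_Icc (a := -L) (b := L)).image hxc).cthickening
    (r := 1) |>.exists_bound_of_continuousOn
      ((hu.fderiv_right le_rfl).continuous_fderiv one_ne_zero).continuousOn
  set C₁ := Cw * (2 * L) * exp (K * (2 * L)) with hC₁def
  have hC₁ : 0 ≤ C₁ := by
    have := (norm_nonneg _).trans (hwbdd 0 0)
    have := (abs_nonneg pu).trans hL
    positivity
  -- `ε₀` makes the Grönwall deviation `ε * C₁` smaller than `1` (the radius on which `C₂` bounds
  -- `D²u`) and than `δ` (the tube in which the agitation is switched off)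
  refine ⟨max (2 * L * exp (D * (2 * L)) * (U * (C₂ * C₁ ^ 2 + Kw * C₁))) 0,
    min 1 δ / (C₁ + 1), by positivity, ?_⟩
  intro p hp t ε hε y hy hy₀
  have hΛ : |p - pu| ≤ 2 * L := (abs_sub p pu).trans (by linarith [abs_le.2 hp])
  have hdev : ∀ q ∈ uIcc pu p, ‖y q - xbar q‖ ≤ ε * C₁ := fun q hq =>
    (norm_sub_le_of_hasDerivAt_add huLip hΛ hxbar hy hy₀ (fun q _ =>
      (norm_smul_of_nonneg hε.1.le _).trans_le (mul_le_mul_of_nonneg_left (hwbdd _ _) hε.1.le))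
      q hq).trans_eq (by rw [hC₁def]; ring)
  have hsmall : ε * C₁ < min 1 δ := calc
    _ < ε * (C₁ + 1) := by nlinarith [hε.1]
    _ ≤ min 1 δ := (le_div_iff₀ (by positivity)).1 hε.2
  rcases lt_or_ge p pu with hup | hdown
  · rw [inner_Jrot_sub_MuOpen_eq_zero_of_lt huLip hxbar hwbdd
      (fun x t ⟨q, hq, hclose⟩ => hopen x t ⟨q, Or.inl hq, hclose⟩) hε.1.le hup
      ((le_abs_self _).trans (abs_sub_comm p pu ▸ hΛ))
      (by simpa only [hC₁def, mul_assoc] using hsmall.trans_le (min_le_right _ _)) hy hy₀,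
      abs_zero]
    positivity
  · have hsub : Icc pu p ⊆ Icc (-L) L := Icc_subset_Icc (by linarith [neg_abs_le pu]) hp.2
    calc _ ≤ 2 * L * exp (D * (2 * L)) * (U * (C₂ * (ε * C₁) ^ 2 + ε * (Kw * (ε * C₁)))) :=
          abs_inner_Jrot_sub_MuOpen_le hu hxbar hw hwLip
            (fun τ hτ s => hopen _ _ ⟨τ, Or.inr hτ, by simpa using hδ⟩) hε.1.le hdown
            ((le_abs_self _).trans hΛ) hy hy₀ (fun q hq => hdev q (Icc_subset_uIcc hq))
            (fun q hq => hU q (hsub hq))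
            (fun q hq => (Real.norm_eq_abs _).symm.trans_le (hD q (hsub hq)))
            (fun q hq x hx => hC₂ x (Metric.closedBall_subset_cthickening
              (mem_image_of_mem xbar (hsub hq)) 1
              (Metric.closedBall_subset_closedBall (hsmall.trans_le (min_le_left _ _)).le hx)))
      _ = 2 * L * exp (D * (2 * L)) * (U * (C₂ * C₁ ^ 2 + Kw * C₁)) * ε ^ 2 := by ring
      _ ≤ _ := by gcongr; exact le_max_left _ _

end Streakline

theorem upstream_streakline_open_general
    (u : E2 → E2) (hu : ContDiff ℝ 2 u)
    (K : ℝ≥0) (huLip : LipschitzWith K u)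
    (xbar : ℝ → E2) (hxbar : ∀ p : ℝ, HasDerivAt xbar (u (xbar p)) p)
    (hune : ∀ p : ℝ, u (xbar p) ≠ 0)
    (pu pd : ℝ)
    (w : E2 → ℝ → E2) (hw : ContDiff ℝ 1 (Function.uncurry w))
    (Cw : ℝ) (hwbdd : ∀ (x : E2) (t : ℝ), ‖w x t‖ ≤ Cw)
    (Kw : ℝ≥0) (hwLip : ∀ t : ℝ, LipschitzWith Kw (fun x => w x t))
    (δ : ℝ) (hδ : 0 < δ)
    (hopen : ∀ (x : E2) (t : ℝ),
      (∃ p : ℝ, (p ≤ pu ∨ pd ≤ p) ∧ ‖x - xbar p‖ < δ) → w x t = 0) :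
    ∀ P > (0:ℝ), ∃ C > (0:ℝ), ∃ ε₀ > (0:ℝ),
      ∀ p ∈ Set.Icc (-P) P, ∀ t : ℝ, ∀ ε ∈ Set.Ioc (0:ℝ) ε₀,
        ∀ X : ℝ → E2,
          (∀ s : ℝ, HasDerivAt X (u (X s) + ε • w (X s) s) s) →
          X (t - p + pu) = xbar pu →
          |⟪X t - xbar p, (‖u (xbar p)‖)⁻¹ • Jrot (u (xbar p))⟫_ℝ
            - MuOpen u xbar w pu pd ε p t / ‖u (xbar p)‖| ≤ C * ε ^ 2 := by
  intro P hP
  obtain ⟨C, ε₀, hε₀, hC⟩ := exists_abs_inner_Jrot_sub_MuOpen_le hu huLip hxbar hw.continuous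
    hwbdd hwLip hδ hopen (le_add_of_nonneg_left hP.le : |pu| ≤ P + |pu|)
  obtain ⟨q₀, -, hq₀⟩ := (isCompact_Icc (a := -P) (b := P)).exists_isMinOn
    (nonempty_Icc.2 (by linarith)) (hu.continuous.comp
      (continuous_iff_continuousAt.2 fun q => (hxbar q).continuousAt)).norm.continuousOn
  have hmin : 0 < ‖u (xbar q₀)‖ := norm_pos_iff.2 (hune q₀)
  refine ⟨max (C / ‖u (xbar q₀)‖) 1, lt_max_of_lt_right one_pos, ε₀, hε₀, ?_⟩
  intro p hp t ε hε X hX hX₀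
  have hbound := hC p (Icc_subset_Icc (by linarith [abs_nonneg pu]) (by linarith [abs_nonneg pu])
    hp) t ε hε (fun q => X (q + t - p))
    (fun q => by simpa only [add_sub_assoc] using (hX (q + (t - p))).comp_add_const q (t - p))
    (by simpa only [show pu + t - p = t - p + pu by ring] using hX₀)
  rw [add_sub_cancel_left] at hbound
  rw [real_inner_smul_right, real_inner_comm, ← div_eq_inv_mul, ← sub_div, abs_div,
    abs_of_pos (norm_pos_iff.2 (hune p))]
  calc _ ≤ |⟪Jrot (u (xbar p)), X t - xbar p⟫_ℝ - MuOpen u xbar w pu pd ε p t|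
        / ‖u (xbar q₀)‖ := div_le_div_of_nonneg_left (abs_nonneg _) hmin (hq₀ hp)
    _ ≤ C / ‖u (xbar q₀)‖ * ε ^ 2 := by
      rw [div_mul_eq_mul_div]
      exact div_le_div_of_nonneg_right hbound hmin.le
    _ ≤ _ := by gcongr; exact le_max_left _ _

/-- **Upstream streakline theorem, open interface.**  For a steady C² globally
Lipschitz planar field `u` with a nonvanishing streakline `x̄`, and a bounded C¹
agitation `w` vanishing near the streakline upstream of `a = x̄(pu)` and
downstream of `b = x̄(pd)`, the normal displacement of the agitated upstream
streakline `x_ε^u(p,t)` from `x̄(p)` equals `M^u_ε(p,t)/|u(x̄(p))|` up to an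
error of order `ε²`, uniformly for `p ∈ [−P,P]` and `t ∈ ℝ`. -/
theorem upstream_streakline_open
    (u : E2 → E2) (hu : ContDiff ℝ 2 u)
    (K : ℝ≥0) (huLip : LipschitzWith K u)
    (xbar : ℝ → E2) (hxbar : ∀ p : ℝ, HasDerivAt xbar (u (xbar p)) p)
    (hune : ∀ p : ℝ, u (xbar p) ≠ 0)
    (pu pd : ℝ) (hpp : pu < pd)
    (w : E2 → ℝ → E2) (hw : ContDiff ℝ 1 (Function.uncurry w))
    (Cw : ℝ) (hwbdd : ∀ (x : E2) (t : ℝ), ‖w x t‖ ≤ Cw)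
    (Kw : ℝ≥0) (hwLip : ∀ t : ℝ, LipschitzWith Kw (fun x => w x t))
    (δ : ℝ) (hδ : 0 < δ)
    (hopen : ∀ (x : E2) (t : ℝ),
      (∃ p : ℝ, (p ≤ pu ∨ pd ≤ p) ∧ ‖x - xbar p‖ < δ) → w x t = 0) :
    ∀ P > (0:ℝ), ∃ C > (0:ℝ), ∃ ε₀ > (0:ℝ),
      ∀ p ∈ Set.Icc (-P) P, ∀ t : ℝ, ∀ ε ∈ Set.Ioc (0:ℝ) ε₀,
        ∀ X : ℝ → E2,
          (∀ s : ℝ, HasDerivAt X (u (X s) + ε • w (X s) s) s) →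
          X (t - p + pu) = xbar pu →
          |⟪X t - xbar p, (‖u (xbar p)‖)⁻¹ • Jrot (u (xbar p))⟫_ℝ
            - MuOpen u xbar w pu pd ε p t / ‖u (xbar p)‖| ≤ C * ε ^ 2 :=
  upstream_streakline_open_general u hu K huLip xbar hxbar hune pu pd w hw Cw hwbdd Kw hwLip δ hδ
    hopen
end
end

section
/- Let U > 0, ω > 0, n ∈ ℕ, and for j = 1, …, n let p_j ∈ ℝ, d_j > 0, v_j ∈ ℝ, φ_j ∈ ℝ, and fix p^u ∈ ℝ. Consider the cross-channel mixer velocity field ẋ = U, ẏ = Σ_{j=1}^n 1_{[U p_j − d_j, U p_j + d_j]}(x) (v_j/d_j²)((x − U p_j)² − d_j²) cos(ω s + φ_j), where 1_E is the indicator of E and s is time. Fix p, t ∈ ℝ and let (X(s), Y(s)) be the solution with (X, Y)(t − p + p^u) = (U p^u, 0). Then X(t) = U p and Y(t) = M_c^u(p,t)/U exactly, where M_c^u(p,t) := ∫_{p^u}^{p} Σ_{j=1}^n 1_{[p_j − d_j/U, p_j + d_j/U]}(τ) U (v_j/d_j²)(U²(τ − p_j)² − d_j²) cos(ω(τ + t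 − p) + φ_j) dτ. -/
/-! Along the flow the streamwise coordinate is `X s = U (s - t + p)`, so the transverse
velocity felt by the particle is a known function of time, and `Y t` is its integral.
Substituting `s = τ + t - p` turns the `j`-th channel window `|X s - U pⱼ| ≤ dⱼ` into
`|τ - pⱼ| ≤ dⱼ / U`, which is the integrand of `M_c^u`. -/

open Set

lemma eq_add_mul_sub_of_hasDerivAt_const {X : ℝ → ℝ} {c : ℝ} (hX : ∀ s, HasDerivAt X c s)
    (a s : ℝ) : X s = X a + c * (s - a) := by
  have h := intervalIntegral.integral_eq_sub_of_hasDerivAt (fun x _ => hX x)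
    (intervalIntegrable_const (a := a) (b := s) (c := c))
  rw [intervalIntegral.integral_const, smul_eq_mul] at h
  linarith

lemma intervalIntegrable_indicator_Icc {g : ℝ → ℝ} (hg : Continuous g) (a b c d : ℝ) :
    IntervalIntegrable ((Icc a b).indicator g) MeasureTheory.volume c d :=
  (hg.integrableOn_Icc.integrable_indicator measurableSet_Icc).intervalIntegrable

lemma indicator_Icc_const_mul {U : ℝ} (hU : 0 < U) (a d : ℝ) (g : ℝ → ℝ) (τ : ℝ) :
    (Icc (U * a - d) (U * a + d)).indicator g (U * τ) =
      (Icc (a - d / U) (a + d / U)).indicator (fun τ' => g (U * τ')) τ := by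
  rw [← indicator_comp_right (U * ·), preimage_const_mul_Icc₀ _ _ hU, sub_div, add_div,
    mul_div_cancel_left₀ _ hU.ne']
  rfl

lemma indicator_Icc_parabolic_profile_const_mul {U : ℝ} (hU : 0 < U) (a d v : ℝ)
    (c : ℝ → ℝ) (τ : ℝ) :
    (Icc (a - d / U) (a + d / U)).indicator
        (fun τ' => U * (v / d ^ 2) * (U ^ 2 * (τ' - a) ^ 2 - d ^ 2) * c τ') τ =
      U * ((Icc (U * a - d) (U * a + d)).indicator
        (fun x => v / d ^ 2 * ((x - U * a) ^ 2 - d ^ 2)) (U * τ) * c τ) := by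
  rw [indicator_Icc_const_mul hU]
  by_cases hτ : τ ∈ Icc (a - d / U) (a + d / U)
  · simp only [indicator_of_mem hτ]
    ring
  · simp only [indicator_of_notMem hτ, zero_mul, mul_zero]

theorem cross_channel_upstream_streakline_general
    (U ω : ℝ) (hU : 0 < U)
    (n : ℕ) (p' d v φ : Fin n → ℝ)
    (pu p t : ℝ)
    (X Y : ℝ → ℝ)
    (hX : ∀ s : ℝ, HasDerivAt X U s)
    (hY : ∀ s : ℝ, HasDerivAt Y
      (∑ j : Fin n,
        Set.indicator (Set.Icc (U * p' j - d j) (U * p' j + d j))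
          (fun x => (v j / (d j) ^ 2) * ((x - U * p' j) ^ 2 - (d j) ^ 2)) (X s) *
          Real.cos (ω * s + φ j)) s)
    (hX0 : X (t - p + pu) = U * pu)
    (hY0 : Y (t - p + pu) = 0) :
    X t = U * p ∧
    Y t = (∫ τ in pu..p,
      ∑ j : Fin n,
        Set.indicator (Set.Icc (p' j - d j / U) (p' j + d j / U))
          (fun τ' => U * (v j / (d j) ^ 2) * (U ^ 2 * (τ' - p' j) ^ 2 - (d j) ^ 2) *
            Real.cos (ω * (τ' + t - p) + φ j)) τ) / U := by
  have hXs : ∀ τ, X (τ + (t - p)) = U * τ := fun τ => by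
    rw [eq_add_mul_sub_of_hasDerivAt_const hX (t - p + pu), hX0]
    ring
  refine ⟨by simpa using hXs p, ?_⟩
  have hderiv : ∀ τ ∈ uIcc pu p, HasDerivAt (fun τ => U * Y (τ + (t - p)))
      (∑ j : Fin n, Set.indicator (Set.Icc (p' j - d j / U) (p' j + d j / U))
        (fun τ' => U * (v j / (d j) ^ 2) * (U ^ 2 * (τ' - p' j) ^ 2 - (d j) ^ 2) *
          Real.cos (ω * (τ' + t - p) + φ j)) τ) τ := fun τ _ => by
    refine (((hY (τ + (t - p))).comp_add_const τ (t - p)).const_mul U).congr_deriv ?_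
    simp only [hXs, Finset.mul_sum]
    refine Finset.sum_congr rfl fun j _ => ?_
    rw [indicator_Icc_parabolic_profile_const_mul hU]
    simp only [add_sub_assoc]
  rw [intervalIntegral.integral_eq_sub_of_hasDerivAt hderiv ?integrable]
  · simp only [add_comm pu, add_sub_cancel, hY0, mul_zero, sub_zero]
    field_simp
  case integrable =>
    simp only [← Finset.sum_fn]
    exact IntervalIntegrable.sum _ fun j _ => intervalIntegrable_indicator_Icc (by fun_prop) _ _ _ _

/-- **Exact upstream streakline for the cross-channel micromixer.**  Two fluids move
with uniform speed `U` along a straight channel with interface `y = 0`, agitated by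
`n` cross-channels, the `j`-th centered at `x = U pⱼ` with half-width `dⱼ`, carrying
a parabolic-profile transverse velocity of amplitude `vⱼ` oscillating as
`cos(ω s + φⱼ)`.  The streakline particle labeled `p` at time `t` (the one which
passed through the anchor point `(U pᵘ, 0)` at time `t − p + pᵘ`) is located exactly
at `(U p, M_c^u(p,t)/U)`. -/
theorem cross_channel_upstream_streakline
    (U ω : ℝ) (hU : 0 < U) (hω : 0 < ω)
    (n : ℕ) (p' d v φ : Fin n → ℝ) (hd : ∀ j, 0 < d j)
    (pu p t : ℝ)
    (X Y : ℝ → ℝ)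
    (hX : ∀ s : ℝ, HasDerivAt X U s)
    (hY : ∀ s : ℝ, HasDerivAt Y
      (∑ j : Fin n,
        Set.indicator (Set.Icc (U * p' j - d j) (U * p' j + d j))
          (fun x => (v j / (d j) ^ 2) * ((x - U * p' j) ^ 2 - (d j) ^ 2)) (X s) *
          Real.cos (ω * s + φ j)) s)
    (hX0 : X (t - p + pu) = U * pu)
    (hY0 : Y (t - p + pu) = 0) :
    X t = U * p ∧
    Y t = (∫ τ in pu..p,
      ∑ j : Fin n,
        Set.indicator (Set.Icc (p' j - d j / U) (p' j + d j / U))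
          (fun τ' => U * (v j / (d j) ^ 2) * (U ^ 2 * (τ' - p' j) ^ 2 - (d j) ^ 2) *
            Real.cos (ω * (τ' + t - p) + φ j)) τ) / U :=
  cross_channel_upstream_streakline_general U ω hU n p' d v φ pu p t X Y hX hY hX0 hY0
end
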